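/- Let (X, Y, ⟨·,·⟩) be a dual pairing, T ⊆ X × Y nonempty cyclically monotone, w = (x₀,y₀) ∈ T, and r = r_T^w Rockafellar's antiderivative. For every h : X → ℝ̄ with h(x₀) = 0 and T ⊆ Graph(∂h), we have r ≤ h pointwise; i.e., r is the minimal antiderivative normalized at x₀. -/
import Mathlib


variable {X Y : Type*} [AddCommGroup X] [Module ℝ X] [AddCommGroup Y] [Module ℝ Y]

/-- `y` is a subgradient of `h : X → ℝ̄` at `x`. -/
def IsSubgrad (b : X →ₗ[ℝ] Y →ₗ[ℝ] ℝ) (h : X → EReal) (x : X) (y : Y) : Prop :=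
  ∃ s : ℝ, h x = (s : EReal) ∧ ∀ w : X, ((b (w - x) y : ℝ) : EReal) + (s : EReal) ≤ h w

/-- Rockafellar's antiderivative of `T` based at `(x₀, y₀)`. -/
noncomputable def rock (b : X →ₗ[ℝ] Y →ₗ[ℝ] ℝ) (T : Set (X × Y))
    (x₀ : X) (y₀ : Y) (x : X) : EReal :=
  sSup {r : EReal | ∃ n : ℕ, 1 ≤ n ∧ ∃ c : ℕ → X × Y, c 0 = (x₀, y₀) ∧
    (∀ i ∈ Finset.Icc 1 n, c i ∈ T) ∧
    r = ((b (x - (c n).1) (c n).2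
        + ∑ i ∈ Finset.range n, b ((c (i + 1)).1 - (c i).1) (c i).2 : ℝ) : EReal)}

/-- Rockafellar's antiderivative is the minimal antiderivative normalized at `x₀`:
if `h(x₀) = 0` and `T ⊆ Graph(∂h)`, then `r ≤ h`. -/
theorem rockafellar_antiderivative_minimal (b : X →ₗ[ℝ] Y →ₗ[ℝ] ℝ)
    (T : Set (X × Y))
    (hcyc : ∀ n : ℕ, 2 ≤ n → ∀ p : ℕ → X × Y,
      (∀ i ∈ Finset.Icc 1 n, p i ∈ T) → p (n + 1) = p 1 →
      0 ≤ ∑ i ∈ Finset.Icc 1 n, b ((p i).1 - (p (i + 1)).1) (p i).2)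
    (x₀ : X) (y₀ : Y) (hw : (x₀, y₀) ∈ T)
    (h : X → EReal) (hh0 : h x₀ = (0 : EReal))
    (hT : ∀ z ∈ T, IsSubgrad b h z.1 z.2) :
    ∀ x : X, rock b T x₀ y₀ x ≤ h x := by
  intro x
  apply sSup_le
  rintro r ⟨n, hn, c, hc0, hcT, rfl⟩
  have hsub : ∀ i ≤ n, IsSubgrad b h (c i).1 (c i).2 := by
    intro i hi
    rcases Nat.eq_zero_or_pos i with rfl | hpos
    · rw [hc0]; exact hT _ hw
    · exact hT _ (hcT i (Finset.mem_Icc.mpr ⟨hpos, hi⟩))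
  have key : ∀ i ≤ n, ∃ s : ℝ, h (c i).1 = (s : EReal) ∧
      (∑ j ∈ Finset.range i, b ((c (j + 1)).1 - (c j).1) (c j).2) ≤ s ∧
      (∀ w : X, ((b (w - (c i).1) (c i).2 : ℝ) : EReal) + (s : EReal) ≤ h w) := by
    intro i hi
    induction i with
    | zero =>
      obtain ⟨s, hs, hsi⟩ := hsub 0 (Nat.zero_le _)
      refine ⟨s, hs, ?_, hsi⟩
      have : h (c 0).1 = (0 : EReal) := by rw [hc0]; exact hh0
      have : (s : EReal) = ((0 : ℝ) : EReal) := by rw [← hs, this]; norm_num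
      simp [EReal.coe_eq_coe_iff.mp this]
    | succ i ih =>
      obtain ⟨s, hs, hsum, hineq⟩ := ih (Nat.le_of_succ_le hi)
      obtain ⟨t, ht, hti⟩ := hsub (i + 1) hi
      refine ⟨t, ht, ?_, hti⟩
      have h1 := hineq (c (i + 1)).1
      rw [ht, ← EReal.coe_add, EReal.coe_le_coe_iff] at h1
      rw [Finset.sum_range_succ]
      linarith
  obtain ⟨s, hs, hsum, hineq⟩ := key n le_rfl
  have h1 := hineq x
  calc ((b (x - (c n).1) (c n).2
        + ∑ i ∈ Finset.range n, b ((c (i + 1)).1 - (c i).1) (c i).2 : ℝ) : EReal)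
      ≤ ((b (x - (c n).1) (c n).2 + s : ℝ) : EReal) := by
        rw [EReal.coe_le_coe_iff]; linarith
    _ ≤ h x := by rw [EReal.coe_add]; exact h1
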